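/- Let λ : ℕ → ℝ satisfy λ_k ≥ 0 for all k, let t > 0, and let x be an element of ℓ² (square-summable complex sequences). Then the function s ↦ e^{-s²/(4t)} · (k ↦ cos(s·√(λ_k)) x_k) is Bochner integrable on ℝ with values in ℓ², and (4πt)^{-1/2} ∫_{-∞}^{∞} e^{-s²/(4t)} (k ↦ cos(s·√(λ_k)) x_k) ds = (k ↦ e^{-t·λ_k} x_k) in ℓ². -/

import Mathlib

/-!
Everything is diagonal in the coordinates of `ℓ²`. The integrand is dominated by
`e^{-s²/(4t)} ‖x‖`, so it is Bochner integrable once strong measurability is obtained from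
that of its coordinates (approximate by finite sums of `lp.single`). Evaluation at a coordinate is
a continuous linear functional and hence commutes with the integral, so the identity reduces to
the scalar Gaussian integral `∫ e^{-s²/(4t)} cos(s b) ds = √(4πt) e^{-t b²}`, the real part of the
Fourier transform of a Gaussian.
-/

open MeasureTheory Real
open scoped ENNReal

theorem integral_exp_neg_mul_sq_mul_cos {a : ℝ} (ha : 0 < a) (b : ℝ) :
    ∫ s : ℝ, exp (-a * s ^ 2) * cos (b * s) = √(π / a) * exp (-b ^ 2 / (4 * a)) := by
  have ha' : 0 < (a : ℂ).re := by simpa using ha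
  have hint : Integrable fun s : ℝ ↦ Complex.exp (Complex.I * b * s) * Complex.exp (-a * s ^ 2) :=
    (integrable_cexp_quadratic ha' (Complex.I * b) 0).congr <| .of_forall fun s ↦ by
      simp only [← Complex.exp_add]; ring_nf
  have hre (s : ℝ) : (Complex.exp (Complex.I * b * s) * Complex.exp (-a * s ^ 2)).re =
      exp (-a * s ^ 2) * cos (b * s) := by
    rw [show -(a : ℂ) * s ^ 2 = ((-a * s ^ 2 : ℝ) : ℂ) by push_cast; ring,
      show Complex.I * b * s = ((b * s : ℝ) : ℂ) * Complex.I by push_cast; ring,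
      ← Complex.ofReal_exp, Complex.re_mul_ofReal, Complex.exp_ofReal_mul_I_re, mul_comm]
  calc ∫ s : ℝ, exp (-a * s ^ 2) * cos (b * s)
      = (∫ s : ℝ, Complex.exp (Complex.I * b * s) * Complex.exp (-a * s ^ 2)).re := by
        simp_rw [← hre]; exact integral_re hint
    _ = √(π / a) * exp (-b ^ 2 / (4 * a)) := by
      rw [fourierIntegral_gaussian ha', ← Complex.ofReal_div,
        show (1 / 2 : ℂ) = ((1 / 2 : ℝ) : ℂ) by push_cast; rfl,
        ← Complex.ofReal_cpow (by positivity), ← sqrt_eq_rpow]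
      norm_cast

theorem integral_exp_neg_sq_div_mul_cos {t : ℝ} (ht : 0 < t) (b : ℝ) :
    ∫ s : ℝ, exp (-s ^ 2 / (4 * t)) * cos (s * b) = √(4 * π * t) * exp (-t * b ^ 2) := by
  have h := integral_exp_neg_mul_sq_mul_cos (inv_pos.2 (mul_pos four_pos ht)) b
  simp only [div_inv_eq_mul, neg_mul, mul_comm _ b] at h ⊢
  convert h using 3 <;> field_simp

theorem integrable_exp_neg_sq_div {t : ℝ} (ht : 0 < t) :
    Integrable fun s : ℝ ↦ exp (-s ^ 2 / (4 * t)) :=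
  (integrable_exp_neg_mul_sq (inv_pos.2 (mul_pos four_pos ht))).congr <| .of_forall fun s ↦ by
    ring_nf

namespace lp

variable {ι : Type*} {E : ι → Type*} [∀ i, NormedAddCommGroup (E i)] {p : ℝ≥0∞} [Fact (1 ≤ p)]

theorem stronglyMeasurable_of_forall_apply [Countable ι] {α : Type*} [MeasurableSpace α]
    (hp : p ≠ ∞) {f : α → lp E p} (hf : ∀ i, StronglyMeasurable fun a ↦ f a i) :
    StronglyMeasurable f := by
  classical
  refine stronglyMeasurable_of_tendsto (f := fun s a ↦ ∑ i ∈ s, lp.single p i (f a i))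
    Filter.atTop (fun s ↦ ?_) (tendsto_pi_nhds.2 fun a ↦ lp.hasSum_single hp (f a))
  exact Finset.stronglyMeasurable_fun_sum _ fun i _ ↦
    (isometry_single (E := E) (p := p) i).continuous.comp_stronglyMeasurable (hf i)

theorem integral_apply [∀ i, NormedSpace ℝ (E i)] [∀ i, CompleteSpace (E i)]
    {α : Type*} [MeasurableSpace α] {μ : Measure α} {f : α → lp E p} (hf : Integrable f μ)
    (i : ι) : (∫ a, f a ∂μ) i = ∫ a, f a i ∂μ :=
  ((evalCLM ℝ E p i).integral_comp_comm hf).symm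

end lp

/-- Spectral (multiplier) form of the Kannai transmutation formula: if `λ_k ≥ 0`,
`t > 0`, `x ∈ ℓ²`, and `y s` is the ℓ² sequence `k ↦ e^{-s²/(4t)} cos(s√(λ_k)) x_k`
while `z` is the ℓ² sequence `k ↦ e^{-tλ_k} x_k`, then `y` is Bochner integrable on `ℝ`
and `(4πt)^{-1/2} ∫_{-∞}^∞ y s ds = z`. -/
theorem statement7 (lam : ℕ → ℝ) (hlam : ∀ k, 0 ≤ lam k)
    (t : ℝ) (ht : 0 < t)
    (x : lp (fun _ : ℕ => ℂ) 2)
    (y : ℝ → lp (fun _ : ℕ => ℂ) 2)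
    (hy : ∀ s : ℝ, ∀ k : ℕ,
      y s k = (Real.exp (-s ^ 2 / (4 * t)) : ℝ) *
        (Real.cos (s * Real.sqrt (lam k)) : ℝ) * x k)
    (z : lp (fun _ : ℕ => ℂ) 2)
    (hz : ∀ k : ℕ, z k = (Real.exp (-t * lam k) : ℝ) * x k) :
    Integrable y ∧
      ((4 * π * t) ^ (-(1 / 2 : ℝ)) : ℝ) • ∫ s : ℝ, y s = z := by
  have hy' (s : ℝ) (k : ℕ) : y s k = (exp (-s ^ 2 / (4 * t)) * cos (s * √(lam k))) • x k := by
    rw [hy, Complex.real_smul]; push_cast; ring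
  have hmeas : StronglyMeasurable y :=
    lp.stronglyMeasurable_of_forall_apply ENNReal.ofNat_ne_top fun k ↦
      Continuous.stronglyMeasurable (by simp_rw [hy]; fun_prop)
  have hbound (s : ℝ) : ‖y s‖ ≤ exp (-s ^ 2 / (4 * t)) * ‖x‖ :=
    calc ‖y s‖ ≤ ‖exp (-s ^ 2 / (4 * t)) • x‖ := lp.norm_mono two_ne_zero fun k ↦ by
          rw [hy', lp.coeFn_smul, Pi.smul_apply, norm_smul, norm_smul, norm_mul]
          gcongr
          exact mul_le_of_le_one_right (norm_nonneg _) (abs_cos_le_one _)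
      _ = exp (-s ^ 2 / (4 * t)) * ‖x‖ := by rw [norm_smul, norm_of_nonneg (exp_pos _).le]
  have hint : Integrable y :=
    ((integrable_exp_neg_sq_div ht).mul_const _).mono' hmeas.aestronglyMeasurable (.of_forall hbound)
  refine ⟨hint, lp.ext <| funext fun k ↦ ?_⟩
  have hcoef : (4 * π * t) ^ (-(1 / 2 : ℝ)) * (√(4 * π * t) * exp (-t * √(lam k) ^ 2)) =
      exp (-t * lam k) := by
    rw [sq_sqrt (hlam k), sqrt_eq_rpow, ← mul_assoc, ← rpow_add (by positivity)]
    norm_num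
  rw [lp.coeFn_smul, Pi.smul_apply, lp.integral_apply hint, hz, ← Complex.real_smul, ← hcoef,
    ← integral_exp_neg_sq_div_mul_cos ht, ← smul_smul, ← integral_smul_const]
  simp_rw [hy']
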